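/- Let p ≥ 1 be an integer, α > 1, β ≤ 0, θ ∈ ℝ. Define f(z) = z^p + Σ_{k≥p+1} [p(p-1)(α-1) e^{iθ} / ((pα + β + k(1-β)) k (k-1))] z^k. Then the coefficients a_k of f satisfy Σ_{k≥p+1} [pα + β + k(1-β)] |a_k| = (p-1)(α-1) < p(α-1); consequently f ∈ M_p(α,β). -/

import Mathlib

/-!
For `w = z f'(z) / f(z)` one has `Re w ≤ p + |w - p|`, so it suffices that
`(1 - β) |w - p| < p (α - 1)`. If `a_k = 0` for `k ≤ p`, then on the unit disc
`|z f' - p f| ≤ (∑ (k - p) |a_k|) |z|^p` and `|f| ≥ (1 - ∑ |a_k|) |z|^p`, which gives this as soon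
as `∑ ((1 - β)(k - p) + p (α - 1)) |a_k| < p (α - 1)`. For the example the weights
`pα + β + k(1 - β)` dominate these sharp weights and cancel the denominators of `a_k`, leaving
`p (p - 1) (α - 1) ∑_{k > p} 1 / (k (k - 1))`, which telescopes to `(p - 1)(α - 1)`.
-/

open Complex Metric

theorem norm_tsum_mul_pow_le {𝕜 : Type*} [NormedField 𝕜] {a : ℕ → 𝕜} {m : ℕ}
    (ha : ∀ k < m, a k = 0) (hs : Summable fun k => ‖a k‖) {z : 𝕜} (hz : ‖z‖ ≤ 1) :
    ‖∑' k, a k * z ^ k‖ ≤ (∑' k, ‖a k‖) * ‖z‖ ^ m := by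
  refine tsum_of_norm_bounded (hs.hasSum.mul_right _) fun k => ?_
  rcases lt_or_ge k m with hk | hk
  · simp [ha k hk]
  · rw [norm_mul, norm_pow]
    exact mul_le_mul_of_nonneg_left (pow_le_pow_of_le_one (norm_nonneg z) hz hk) (norm_nonneg _)

theorem summable_natCast_mul_pow_sub_one {r : ℝ} (hr₀ : 0 ≤ r) (hr : r < 1) :
    Summable fun n : ℕ => n * r ^ (n - 1) := by
  refine (summable_nat_add_iff 1).mp ?_
  have hgeom := (hasSum_coe_mul_geometric_of_norm_lt_one (r := r)
    (by rwa [Real.norm_of_nonneg hr₀])).summable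
  refine (hgeom.add (summable_geometric_of_lt_one hr₀ hr)).congr fun n => ?_
  push_cast
  ring

section PowerSeries

variable {a : ℕ → ℂ} {M : ℝ}

theorem summable_natCast_mul_mul_pow (hM : ∀ n, ‖a n‖ ≤ M) {z : ℂ} (hz : ‖z‖ < 1) :
    Summable fun n : ℕ => (n : ℂ) * a n * z ^ n := by
  refine .of_norm_bounded
    (((hasSum_coe_mul_geometric_of_norm_lt_one (r := ‖z‖) (by simpa using hz)).summable).mul_left M)
    fun n => ?_
  rw [norm_mul, norm_mul, norm_pow, Complex.norm_natCast]
  calc (n : ℝ) * ‖a n‖ * ‖z‖ ^ n ≤ n * M * ‖z‖ ^ n := by grw [hM n]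
    _ = M * (n * ‖z‖ ^ n) := by ring

theorem summable_mul_pow (hM : ∀ n, ‖a n‖ ≤ M) {z : ℂ} (hz : ‖z‖ < 1) :
    Summable fun n : ℕ => a n * z ^ n := by
  refine .of_norm_bounded ((summable_geometric_of_lt_one (norm_nonneg z) hz).mul_left M) fun n => ?_
  rw [norm_mul, norm_pow]
  exact mul_le_mul_of_nonneg_right (hM n) (pow_nonneg (norm_nonneg z) n)

theorem hasDerivAt_tsum_mul_pow (hM : ∀ n, ‖a n‖ ≤ M) {z : ℂ} (hz : ‖z‖ < 1) :
    HasDerivAt (fun y => ∑' n, a n * y ^ n) (∑' n, a n * (n * z ^ (n - 1))) z := by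
  obtain ⟨r, hzr, hr⟩ := exists_between hz
  have hr₀ : 0 < r := (norm_nonneg z).trans_lt hzr
  refine hasDerivAt_tsum_of_isPreconnected
    ((summable_natCast_mul_pow_sub_one hr₀.le hr).mul_left M) isOpen_ball
    (convex_ball _ _).isPreconnected (fun n y _ => (hasDerivAt_pow n y).const_mul (a n))
    (fun n y hy => ?_) (mem_ball_self hr₀) ?_ (mem_ball_zero_iff.mpr hzr)
  · rw [norm_mul, norm_mul, norm_pow, Complex.norm_natCast]
    have hy : ‖y‖ ≤ r := (mem_ball_zero_iff.mp hy).le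
    have hM0 : 0 ≤ M := (norm_nonneg _).trans (hM 0)
    gcongr
    exact hM n
  · exact summable_mul_pow hM (by simp)

theorem natCast_mul_pow_sub_one (z : ℂ) (n : ℕ) : z * (n * z ^ (n - 1)) = n * z ^ n := by
  rcases n with _ | n
  · simp
  · rw [Nat.add_sub_cancel, pow_succ]
    ring

theorem mul_deriv_sub_mul_eq_tsum (hM : ∀ n, ‖a n‖ ≤ M) {z : ℂ} (hz : ‖z‖ < 1) (p : ℕ) :
    z * deriv (fun y => y ^ p + ∑' n, a n * y ^ n) z - p * (z ^ p + ∑' n, a n * z ^ n) =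
      ∑' n : ℕ, ((n : ℂ) - p) * a n * z ^ n := by
  have hderiv : deriv (fun y => y ^ p + ∑' n, a n * y ^ n) z =
      p * z ^ (p - 1) + ∑' n : ℕ, a n * (n * z ^ (n - 1)) :=
    ((hasDerivAt_pow p z).add (hasDerivAt_tsum_mul_pow hM hz)).deriv
  have hz_tsum : z * ∑' n : ℕ, a n * (n * z ^ (n - 1)) = ∑' n : ℕ, (n : ℂ) * a n * z ^ n := by
    rw [← tsum_mul_left]
    congr 1
    funext n
    rw [mul_left_comm, natCast_mul_pow_sub_one]
    ring
  have hsub := (summable_natCast_mul_mul_pow hM hz).tsum_sub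
    ((summable_mul_pow hM hz).mul_left (p : ℂ))
  rw [hderiv, mul_add, natCast_mul_pow_sub_one, hz_tsum, mul_add, ← tsum_mul_left]
  simp only [sub_mul, mul_assoc] at hsub ⊢
  rw [hsub]
  ring

end PowerSeries

/-- The class `M_p(α,β)`. The condition is only imposed off `z = 0`, where `z f'(z) / f(z)` has a
removable singularity. -/
def IsInClassM (p : ℕ) (α β : ℝ) (f : ℂ → ℂ) : Prop :=
  ∀ z ∈ ball (0 : ℂ) 1, z ≠ 0 →
    (z * deriv f z / f z).re < β * ‖z * deriv f z / f z - (p : ℂ)‖ + (p : ℝ) * α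

theorem re_lt_of_norm_sub_mul_le {w : ℂ} {p α β A B : ℝ} (hβ : β ≤ 0) (hA : A < 1)
    (hw : ‖w - p‖ * (1 - A) ≤ B) (hAB : (1 - β) * B + p * (α - 1) * A < p * (α - 1)) :
    w.re < β * ‖w - p‖ + p * α := by
  have hre : w.re - p ≤ ‖w - p‖ := by simpa using re_le_norm (w - p)
  have hdist : (1 - β) * ‖w - p‖ < p * (α - 1) := by
    refine lt_of_mul_lt_mul_right ?_ (sub_pos.mpr hA).le
    nlinarith
  linarith

theorem norm_mul_deriv_div_sub_mul_le {p : ℕ} {a : ℕ → ℂ} {f : ℂ → ℂ}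
    (hf : f = fun y => y ^ p + ∑' k, a k * y ^ k) (ha : ∀ k ≤ p, a k = 0)
    (hA : Summable fun k => ‖a k‖) (hB : Summable fun k : ℕ => ((k : ℝ) - p) * ‖a k‖)
    (hA1 : ∑' k, ‖a k‖ < 1) {z : ℂ} (hz : ‖z‖ < 1) (hz0 : z ≠ 0) :
    ‖z * deriv f z / f z - p‖ * (1 - ∑' k, ‖a k‖) ≤ ∑' k : ℕ, ((k : ℝ) - p) * ‖a k‖ := by
  set A := ∑' k, ‖a k‖
  set B := ∑' k : ℕ, ((k : ℝ) - p) * ‖a k‖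
  have hnorm_coeff (k : ℕ) : ‖((k : ℂ) - p) * a k‖ = ((k : ℝ) - p) * ‖a k‖ := by
    rcases le_or_gt k p with hk | hk
    · simp [ha k hk]
    · rw [norm_mul, ← ofReal_natCast, ← ofReal_natCast, ← ofReal_sub, norm_real,
        Real.norm_of_nonneg (sub_nonneg.mpr (Nat.cast_le.mpr hk.le))]
  have hG : ‖z * deriv f z - p * f z‖ ≤ B * ‖z‖ ^ p := by
    rw [hf, mul_deriv_sub_mul_eq_tsum (fun n => hA.le_tsum n fun _ _ => norm_nonneg _) hz]
    simpa only [hnorm_coeff] using norm_tsum_mul_pow_le (a := fun k => ((k : ℂ) - p) * a k)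
      (fun k hk => by simp [ha k hk.le]) (by simpa only [hnorm_coeff] using hB) hz.le
  have hF : (1 - A) * ‖z‖ ^ p ≤ ‖f z‖ := by
    have := norm_tsum_mul_pow_le (fun k hk => ha k hk.le) hA hz.le
    have := norm_sub_le_norm_add (z ^ p) (∑' k, a k * z ^ k)
    rw [hf, norm_pow] at *
    linarith
  have hz_pow : 0 < ‖z‖ ^ p := pow_pos (norm_pos_iff.mpr hz0) p
  have hF0 : f z ≠ 0 := norm_pos_iff.mp (lt_of_lt_of_le (by nlinarith) hF)
  have hw : ‖z * deriv f z / f z - p‖ * ‖f z‖ = ‖z * deriv f z - p * f z‖ := by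
    rw [← norm_mul, sub_mul, div_mul_cancel₀ _ hF0]
  refine le_of_mul_le_mul_right ?_ hz_pow
  calc ‖z * deriv f z / f z - p‖ * (1 - A) * ‖z‖ ^ p
      ≤ ‖z * deriv f z / f z - p‖ * ‖f z‖ := by
        rw [mul_assoc]; exact mul_le_mul_of_nonneg_left hF (norm_nonneg _)
    _ ≤ B * ‖z‖ ^ p := hw ▸ hG

theorem isInClassM_of_hasSum {p : ℕ} {α β S : ℝ} {a : ℕ → ℂ} (hp : 1 ≤ p) (hα : 1 < α)
    (hβ : β ≤ 0) (ha : ∀ k ≤ p, a k = 0)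
    (hS : HasSum (fun k : ℕ => ((1 - β) * (k - p) + p * (α - 1)) * ‖a k‖) S)
    (hSp : S < p * (α - 1)) :
    IsInClassM p α β fun z => z ^ p + ∑' k, a k * z ^ k := by
  have hpα : 0 < (p : ℝ) * (α - 1) := mul_pos (by exact_mod_cast hp) (sub_pos.mpr hα)
  have hβ1 : 0 < 1 - β := by linarith
  have hb_nonneg (k : ℕ) : 0 ≤ ((k : ℝ) - p) * ‖a k‖ := by
    rcases le_or_gt k p with hk | hk
    · simp [ha k hk]
    · exact mul_nonneg (sub_nonneg.mpr (by exact_mod_cast hk.le)) (norm_nonneg _)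
  have hsplit (k : ℕ) : ((1 - β) * (k - p) + p * (α - 1)) * ‖a k‖ =
      (1 - β) * ((k - p) * ‖a k‖) + p * (α - 1) * ‖a k‖ := by ring
  have hA : Summable fun k => ‖a k‖ :=
    (summable_mul_left_iff hpα.ne').mp <| hS.summable.of_nonneg_of_le (fun k => by positivity)
      fun k => by nlinarith [hsplit k, hb_nonneg k]
  have hB : Summable fun k : ℕ => ((k : ℝ) - p) * ‖a k‖ :=
    (summable_mul_left_iff hβ1.ne').mp <| hS.summable.of_nonneg_of_le
      (fun k => mul_nonneg hβ1.le (hb_nonneg k)) fun k => by nlinarith [hsplit k, norm_nonneg (a k)]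
  have hS_eq : S = (1 - β) * ∑' k : ℕ, ((k : ℝ) - p) * ‖a k‖ + p * (α - 1) * ∑' k, ‖a k‖ :=
    hS.unique (by simpa only [hsplit] using (hB.hasSum.mul_left _).add (hA.hasSum.mul_left _))
  have hA1 : ∑' k, ‖a k‖ < 1 := by
    have : 0 ≤ (1 - β) * ∑' k : ℕ, ((k : ℝ) - p) * ‖a k‖ :=
      mul_nonneg hβ1.le (tsum_nonneg hb_nonneg)
    exact lt_of_mul_lt_mul_left (a := p * (α - 1)) (by linarith) hpα.le
  intro z hz hz0
  exact re_lt_of_norm_sub_mul_le hβ hA1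
    (norm_mul_deriv_div_sub_mul_le rfl ha hA hB hA1 (mem_ball_zero_iff.mp hz) hz0) (hS_eq ▸ hSp)

open Filter Topology in
theorem hasSum_sub_succ_of_antitone {f : ℕ → ℝ} {l : ℝ} (hf : Antitone f)
    (hl : Tendsto f atTop (𝓝 l)) : HasSum (fun n => f n - f (n + 1)) (f 0 - l) := by
  rw [hasSum_iff_tendsto_nat_of_nonneg fun n => sub_nonneg.mpr (hf n.le_succ)]
  simpa only [Finset.sum_range_sub'] using tendsto_const_nhds.sub hl

theorem hasSum_ite_one_div_mul_sub_one {p : ℕ} (hp : 1 ≤ p) :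
    HasSum (fun k : ℕ => if p + 1 ≤ k then 1 / ((k : ℝ) * (k - 1)) else 0) (1 / p) := by
  have hp₀ : (0 : ℝ) < p := by exact_mod_cast hp
  have htel := hasSum_sub_succ_of_antitone (f := fun n : ℕ => 1 / ((n : ℝ) + p)) (l := 0)
    (fun m n hmn => one_div_le_one_div_of_le (by positivity) (by gcongr))
    (by simpa only [one_div, Pi.inv_def] using
      (tendsto_natCast_atTop_atTop.atTop_add tendsto_const_nhds).inv_tendsto_atTop)
  have hhead : ∑ k ∈ Finset.range (p + 1),
      (if p + 1 ≤ k then 1 / ((k : ℝ) * (k - 1)) else 0) = 0 :=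
    Finset.sum_eq_zero fun k hk => if_neg (by simpa using hk)
  have htail (n : ℕ) :
      (if p + 1 ≤ n + (p + 1) then 1 / (((n + (p + 1) : ℕ) : ℝ) * ((n + (p + 1) : ℕ) - 1)) else 0) =
        1 / ((n : ℝ) + p) - 1 / (((n + 1 : ℕ) : ℝ) + p) := by
    have hnp : (n : ℝ) + p ≠ 0 := by positivity
    rw [if_pos (Nat.le_add_left _ _)]
    push_cast
    rw [show (n : ℝ) + (p + 1) - 1 = n + p by ring]
    field_simp
    ring
  refine (hasSum_nat_add_iff' (p + 1)).mp ?_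
  simpa only [hhead, sub_zero, htail, Nat.cast_zero, zero_add] using htel

noncomputable def exampleCoeff (p : ℕ) (α β θ : ℝ) (k : ℕ) : ℂ :=
  if p + 1 ≤ k then
    ((p : ℂ) * ((p : ℂ) - 1) * ((α : ℂ) - 1) * Complex.exp (θ * Complex.I)) /
      ((((p : ℂ) * α + β + (k : ℂ) * (1 - β))) * (k : ℂ) * ((k : ℂ) - 1))
  else 0

section Example

variable {p : ℕ} {α β : ℝ} (hp : 1 ≤ p) (hα : 1 < α) (hβ : β ≤ 0) (θ : ℝ)
include hp hα hβ

theorem weight_mul_norm_exampleCoeff (k : ℕ) :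
    ((p : ℝ) * α + β + k * (1 - β)) * ‖exampleCoeff p α β θ k‖ =
      p * (p - 1) * (α - 1) * (if p + 1 ≤ k then 1 / ((k : ℝ) * (k - 1)) else 0) := by
  unfold exampleCoeff
  split_ifs with hk
  · have hp₁ : (1 : ℝ) ≤ p := by exact_mod_cast hp
    have hk₁ : (p : ℝ) + 1 ≤ k := by exact_mod_cast hk
    have hc : 0 < (p : ℝ) * α + β + k * (1 - β) := by nlinarith
    have hden : 0 < ((p : ℝ) * α + β + k * (1 - β)) * k * (k - 1) :=
      mul_pos (mul_pos hc (by linarith)) (by linarith)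
    have hnum : 0 ≤ (p : ℝ) * (p - 1) * (α - 1) :=
      mul_nonneg (mul_nonneg (by linarith) (by linarith)) (by linarith)
    have hcoeff : ((p : ℂ) * ((p : ℂ) - 1) * ((α : ℂ) - 1) * Complex.exp (θ * Complex.I)) /
        ((((p : ℂ) * α + β + (k : ℂ) * (1 - β))) * (k : ℂ) * ((k : ℂ) - 1)) =
        (((p * (p - 1) * (α - 1)) / (((p : ℝ) * α + β + k * (1 - β)) * k * (k - 1)) : ℝ) : ℂ) *
          Complex.exp (θ * Complex.I) := by
      push_cast
      ring
    rw [hcoeff, norm_mul, norm_exp_ofReal_mul_I, mul_one, norm_real,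
      Real.norm_of_nonneg (div_nonneg hnum hden.le)]
    field_simp
  · simp

theorem hasSum_weight_mul_norm_exampleCoeff :
    HasSum (fun k : ℕ => ((p : ℝ) * α + β + k * (1 - β)) * ‖exampleCoeff p α β θ k‖)
      ((p - 1) * (α - 1)) := by
  simp only [weight_mul_norm_exampleCoeff hp hα hβ θ]
  have hval : (p : ℝ) * (p - 1) * (α - 1) * (1 / p) = (p - 1) * (α - 1) := by field_simp
  simpa only [hval] using (hasSum_ite_one_div_mul_sub_one hp).mul_left (p * (p - 1) * (α - 1))

theorem isInClassM_exampleCoeff :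
    IsInClassM p α β fun z => z ^ p + ∑' k, exampleCoeff p α β θ k * z ^ k := by
  have hp₁ : (1 : ℝ) ≤ p := by exact_mod_cast hp
  have hzero (k : ℕ) (hk : k ≤ p) : exampleCoeff p α β θ k = 0 := if_neg (by omega)
  -- on the support `k > p`, the weights exceed the sharp ones by `2p + β(1 - p) ≥ 0`
  have hweight (k : ℕ) :
      0 ≤ ((1 - β) * (k - p) + p * (α - 1)) * ‖exampleCoeff p α β θ k‖ ∧
      ((1 - β) * (k - p) + p * (α - 1)) * ‖exampleCoeff p α β θ k‖ ≤
        ((p : ℝ) * α + β + k * (1 - β)) * ‖exampleCoeff p α β θ k‖ := by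
    rcases le_or_gt k p with hk | hk
    · simp [hzero k hk]
    · have hk₁ : (p : ℝ) ≤ k := by exact_mod_cast hk.le
      constructor
      · exact mul_nonneg (by nlinarith) (norm_nonneg _)
      · exact mul_le_mul_of_nonneg_right (by nlinarith) (norm_nonneg _)
  have hsum := hasSum_weight_mul_norm_exampleCoeff hp hα hβ θ
  have hsharp := hsum.summable.of_nonneg_of_le (fun k => (hweight k).1) fun k => (hweight k).2
  refine isInClassM_of_hasSum hp hα hβ hzero hsharp.hasSum ?_
  calc _ ≤ ((p : ℝ) - 1) * (α - 1) := hasSum_le (fun k => (hweight k).2) hsharp.hasSum hsum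
    _ < p * (α - 1) := by nlinarith

end Example

/-- The Example: an explicit member of the class `M_p(α,β)`. -/
theorem stmt_4 (p : ℕ) (hp : 1 ≤ p) (α β θ : ℝ) (hα : 1 < α) (hβ : β ≤ 0)
    (a : ℕ → ℂ) (f : ℂ → ℂ)
    (ha : ∀ k : ℕ, a k = if p + 1 ≤ k then
        ((p : ℂ) * ((p : ℂ) - 1) * ((α : ℂ) - 1) * Complex.exp (θ * Complex.I)) /
          ((((p : ℂ) * α + β + (k : ℂ) * (1 - β))) * (k : ℂ) * ((k : ℂ) - 1))
      else 0)
    (hf : ∀ z : ℂ, f z = z ^ p + ∑' k : ℕ, a k * z ^ k) :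
    (∑' k : ℕ, ((p : ℝ) * α + β + (k : ℝ) * (1 - β)) * ‖a k‖ = ((p : ℝ) - 1) * (α - 1)) ∧
      ((p : ℝ) - 1) * (α - 1) < (p : ℝ) * (α - 1) ∧
      (∀ z ∈ ball (0 : ℂ) 1, z ≠ 0 →
        (z * deriv f z / f z).re < β * ‖z * deriv f z / f z - (p : ℂ)‖ + (p : ℝ) * α) := by
  obtain rfl : a = exampleCoeff p α β θ := funext ha
  obtain rfl : f = fun z => z ^ p + ∑' k, exampleCoeff p α β θ k * z ^ k := funext hf
  exact ⟨(hasSum_weight_mul_norm_exampleCoeff hp hα hβ θ).tsum_eq, by nlinarith,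
    isInClassM_exampleCoeff hp hα hβ θ⟩
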